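/- arXiv:2304.08694 — 6 statements merged into one kernel-verified Lean document; each statement's English description precedes it below -/
import Mathlib

section
/- Let A = {0 = a₀ < a₁ < … < a_ℓ < a_{ℓ+1} = m} ⊆ ℤ with gcd(A)=1 and t ≥ 1. For every h ≥ ⌊(Fr_t(A)+m)/a₁⌋ + ⌊(Fr_t(m−A)+m)/(m−a_ℓ)⌋, the set (hA)^{(t)} equals [0, hm] ∖ (E_t(A) ∪ (hm − E_t(m−A))). -/
/-!
The multiplicity of `a₀ = 0` is left implicit, so `ρ_{A,h}(n)` counts multiplicity vectors `k`
on `a₁, …, a_{ℓ+1}` with `∑ k ≤ h`. Padding with the multiplicity `h - ∑ k` of `0`, a vector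
with exactly `h` parts represents `n` by `A` iff it represents `hm - n` by `m - A`, which gives
the inclusion `⊆`. Conversely, strip `q` copies of `m` from `n` to land in `(Fr_t(A), Fr_t(A) + m]`;
there every value has `t` representations, each with at most `(Fr_t(A) + m) / a₁` parts, so `n`
has `t` representations with at most `(Fr_t(A) + m) / a₁ + q` parts. The same on the reflected
side for `hm - n` gives a bound `(Fr_t(m - A) + m) / (m - a_ℓ) + q'`, and both bounds cannot exceed
`h`: otherwise `q + q' > h`, while `q m < n` and `q' m < hm - n`. `E_t(A)` is bounded because
`gcd A = 1`: every `n ≥ m ∑ A + t m a₁` has a representation with `a₁`-coefficient in each of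
`[0, m), [m, 2m), …, [(t - 1) m, t m)`.
-/

open Finset

namespace RepCount

variable {ι : Type*} [Fintype ι] (w : ι → ℕ)

-- With `w` listing the nonzero elements of `A`, these are `ρ_A(n)` and `ρ_{A,h}(n)`.
noncomputable def repCount (n : ℕ) : ℕ := Nat.card {k : ι → ℕ // ∑ i, k i * w i = n}

noncomputable def repCountLe (h n : ℕ) : ℕ :=
  Nat.card {k : ι → ℕ // ∑ i, k i * w i = n ∧ ∑ i, k i ≤ h}

noncomputable def repCountEq (h n : ℕ) : ℕ :=
  Nat.card {k : ι → ℕ // ∑ i, k i * w i = n ∧ ∑ i, k i = h}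

theorem finite_reps (hw : ∀ i, 0 < w i) (n : ℕ) :
    Finite {k : ι → ℕ // ∑ i, k i * w i = n} := by
  refine (Set.Finite.pi fun _ => Set.finite_Iic n).subset fun k (hk : _ = n) i _ => ?_
  calc k i ≤ k i * w i := Nat.le_mul_of_pos_right _ (hw i)
    _ ≤ ∑ j, k j * w j :=
      single_le_sum (f := fun j => k j * w j) (fun j _ => Nat.zero_le _) (mem_univ i)
    _ = n := hk

theorem finite_repsLe (hw : ∀ i, 0 < w i) (h n : ℕ) :
    Finite {k : ι → ℕ // ∑ i, k i * w i = n ∧ ∑ i, k i ≤ h} :=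
  have := finite_reps w hw n
  Finite.of_injective _ (Subtype.impEmbedding _ _ fun _ => And.left).injective

theorem repCountLe_le_repCount (hw : ∀ i, 0 < w i) (h n : ℕ) :
    repCountLe w h n ≤ repCount w n :=
  have := finite_reps w hw n
  Nat.card_le_card_of_injective _ (Subtype.impEmbedding _ _ fun _ => And.left).injective

theorem repCountLe_mono (hw : ∀ i, 0 < w i) (n : ℕ) : Monotone fun h => repCountLe w h n :=
  fun _ h' hh =>
  have := finite_repsLe w hw h' n
  Nat.card_le_card_of_injective _
    (Subtype.impEmbedding _ _ fun _ hk => ⟨hk.1, hk.2.trans hh⟩).injective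

theorem repCountLe_eq_repCount {h n : ℕ}
    (hbound : ∀ k : ι → ℕ, ∑ i, k i * w i = n → ∑ i, k i ≤ h) :
    repCountLe w h n = repCount w n :=
  Nat.card_congr <| Equiv.subtypeEquivRight fun k => ⟨And.left, fun hk => ⟨hk, hbound k hk⟩⟩

theorem mul_sum_le_sum_mul {w₀ : ℕ} (hw : ∀ i, w₀ ≤ w i) (k : ι → ℕ) :
    w₀ * ∑ i, k i ≤ ∑ i, k i * w i := by
  rw [mul_sum]
  exact sum_le_sum fun i _ => by rw [mul_comm]; exact Nat.mul_le_mul_left _ (hw i)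

theorem le_mul_of_repCountLe_pos {m h n : ℕ} (hw : ∀ i, w i ≤ m) (hpos : 0 < repCountLe w h n) :
    n ≤ h * m := by
  obtain ⟨⟨k, rfl, hk⟩⟩ := (Nat.card_pos_iff.mp hpos).1
  calc ∑ i, k i * w i ≤ ∑ i, k i * m := sum_le_sum fun i _ => Nat.mul_le_mul_left _ (hw i)
    _ = (∑ i, k i) * m := sum_mul ..|>.symm
    _ ≤ h * m := Nat.mul_le_mul_right _ hk

theorem repCountEq_eq_repCountLe_succAbove {r : ℕ} (w : Fin (r + 1) → ℕ) (p : Fin (r + 1))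
    (hp : w p = 0) (h n : ℕ) :
    repCountEq w h n = repCountLe (fun i => w (p.succAbove i)) h n := by
  refine Nat.card_congr
    { toFun := fun k => ⟨fun i => k.1 (p.succAbove i), ?_, ?_⟩
      invFun := fun k => ⟨p.insertNth (h - ∑ i, k.1 i) k.1, ?_, ?_⟩
      left_inv := fun k => Subtype.ext ?_
      right_inv := fun k => Subtype.ext ?_ }
  · simpa [Fin.sum_univ_succAbove _ p, hp] using k.2.1
  · have := k.2.2
    rw [Fin.sum_univ_succAbove _ p] at this
    dsimp only
    omega
  · simpa [Fin.sum_univ_succAbove _ p, hp] using k.2.1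
  · simp [Fin.sum_univ_succAbove _ p, k.2.2]
  · have := k.2.2
    rw [Fin.sum_univ_succAbove _ p] at this
    have hkp : h - ∑ i, k.1 (p.succAbove i) = k.1 p := by omega
    simp only [hkp]
    exact Fin.insertNth_self_removeNth p k.1
  · exact Fin.removeNth_insertNth (α := fun _ => ℕ) p _ k.1

theorem repCountEq_reflect {m h n : ℕ} (hw : ∀ i, w i ≤ m) (hn : n ≤ h * m) :
    repCountEq w h n = repCountEq (fun i => m - w i) h (h * m - n) := by
  refine Nat.card_congr (Equiv.subtypeEquivRight fun k => ?_)
  have hsum : ∑ i, k i * (m - w i) + ∑ i, k i * w i = (∑ i, k i) * m := by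
    rw [← sum_add_distrib, sum_mul]
    exact sum_congr rfl fun i _ => by rw [← mul_add, Nat.sub_add_cancel (hw i)]
  dsimp only
  constructor
  · rintro ⟨hk, rfl⟩
    exact ⟨by omega, rfl⟩
  · rintro ⟨hk, rfl⟩
    exact ⟨by omega, rfl⟩

/-- Both sides count the same multiplicity vectors on `a₀, …, a_{ℓ+1}` with exactly `h` parts. -/
theorem repCountLe_reflect {ℓ m : ℕ} (a : ℕ → ℕ) (ha0 : a 0 = 0)
    (ham : a (ℓ + 1) = m) (hle : ∀ i ≤ ℓ + 1, a i ≤ m) {h n : ℕ} (hn : n ≤ h * m) :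
    repCountLe (fun i : Fin (ℓ + 1) => a (i + 1)) h n =
      repCountLe (fun i : Fin (ℓ + 1) => m - a i) h (h * m - n) := by
  have hA := repCountEq_eq_repCountLe_succAbove (fun i : Fin (ℓ + 2) => a i) 0 ha0 h n
  have hB := repCountEq_eq_repCountLe_succAbove (fun i : Fin (ℓ + 2) => m - a i) (Fin.last _)
    (by simp [ham]) h (h * m - n)
  simp only [Fin.succAbove_zero, Fin.val_succ, Fin.succAbove_last, Fin.val_castSucc] at hA hB
  rw [← hA, ← hB]
  exact repCountEq_reflect _ (fun i => hle i (by omega)) hn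

theorem exists_lt_sum_mul_modEq {m : ℕ} [NeZero m] (hgcd : univ.gcd w = 1) (n : ℕ) :
    ∃ c : ι → ℕ, (∀ i, c i < m) ∧ ∑ i, c i * w i ≡ n [MOD m] := by
  obtain ⟨g, hg⟩ := univ.gcd_eq_sum_mul fun i => (w i : ℤ)
  have hgcdℤ : univ.gcd (fun i => (w i : ℤ)) = 1 := by
    have hdvd : (univ.gcd fun i => (w i : ℤ)).natAbs ∣ univ.gcd w :=
      Finset.dvd_gcd fun i _ => Int.natAbs_dvd_natAbs.mpr (Finset.gcd_dvd (mem_univ i))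
    rw [hgcd, Nat.dvd_one] at hdvd
    have := Int.finsetGcd_nonneg (s := univ) (f := fun i => (w i : ℤ))
    omega
  refine ⟨fun i => ((n * g i : ℤ) : ZMod m).val, fun i => ZMod.val_lt _, ?_⟩
  rw [← ZMod.natCast_eq_natCast_iff]
  push_cast [ZMod.natCast_zmod_val]
  have := congrArg (fun z : ℤ => (z : ZMod m)) hg
  push_cast [hgcdℤ] at this
  calc ∑ i, (n : ZMod m) * g i * w i = n * ∑ i, (w i : ZMod m) * g i := by
        rw [mul_sum]; exact sum_congr rfl fun i _ => by ring
    _ = n := by rw [← this, mul_one]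

variable [DecidableEq ι]

theorem sum_add_single_mul (k : ι → ℕ) (i₀ : ι) (q : ℕ) :
    ∑ i, (k + Pi.single i₀ q : ι → ℕ) i * w i = ∑ i, k i * w i + q * w i₀ := by
  simp [add_mul, sum_add_distrib, Pi.single_apply]

theorem sum_add_single (k : ι → ℕ) (i₀ : ι) (q : ℕ) :
    ∑ i, (k + Pi.single i₀ q : ι → ℕ) i = ∑ i, k i + q := by
  simpa using sum_add_single_mul (fun _ => 1) k i₀ q

theorem repCountLe_le_repCountLe_add (hw : ∀ i, 0 < w i) (i₀ : ι) (h n q : ℕ) :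
    repCountLe w h n ≤ repCountLe w (h + q) (n + q * w i₀) :=
  have := finite_repsLe w hw (h + q) (n + q * w i₀)
  Nat.card_le_card_of_injective
    (fun k => ⟨k.1 + Pi.single i₀ q, by rw [sum_add_single_mul, k.2.1],
      by rw [sum_add_single]; exact Nat.add_le_add_right k.2.2 q⟩)
    fun _ _ hkk' => Subtype.ext (add_right_cancel (congrArg Subtype.val hkk'))

variable {m : ℕ} {iₘ : ι}

theorem exists_sum_mul_eq_of_lt (hm : 0 < m) (hgcd : univ.gcd w = 1) (him : w iₘ = m)
    {i₁ : ι} (hne : i₁ ≠ iₘ) {n : ℕ} (hn : m * ∑ i, w i ≤ n) :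
    ∃ k : ι → ℕ, ∑ i, k i * w i = n ∧ k i₁ < m := by
  have := NeZero.of_pos hm
  obtain ⟨c, hcm, hc⟩ := exists_lt_sum_mul_modEq w hgcd (m := m) n
  have hcn : ∑ i, c i * w i ≤ n := by
    refine le_trans ?_ hn
    rw [mul_sum]
    exact sum_le_sum fun i _ => Nat.mul_le_mul_right _ (hcm i).le
  obtain ⟨q, hq⟩ := (Nat.modEq_iff_dvd' hcn).mp hc
  refine ⟨c + Pi.single iₘ q, ?_, by simpa [hne] using hcm i₁⟩
  rw [sum_add_single_mul, him, ← hq.trans (mul_comm _ _)]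
  omega

theorem le_repCount_of_le (hm : 0 < m) (hgcd : univ.gcd w = 1) (hw : ∀ i, 0 < w i)
    (him : w iₘ = m) {i₁ : ι} (hne : i₁ ≠ iₘ) {t n : ℕ}
    (hn : m * ∑ i, w i + t * (m * w i₁) ≤ n) : t ≤ repCount w n := by
  have := finite_reps w hw n
  have hj (j : Fin t) : m * ∑ i, w i ≤ n - j * (m * w i₁) := by
    have := Nat.mul_le_mul_right (m * w i₁) j.2.le
    omega
  choose k hk hkm using fun j : Fin t => exists_sum_mul_eq_of_lt w hm hgcd him hne (hj j)
  -- the `t` representations are told apart by the quotient of their `i₁`-coordinate by `m`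
  have hval (j : Fin t) : (k j + Pi.single i₁ (j * m) : ι → ℕ) i₁ / m = j := by
    simp [Nat.add_mul_div_right _ _ hm, Nat.div_eq_of_lt (hkm j)]
  simpa [repCount] using Nat.card_le_card_of_injective
    (fun j : Fin t => (⟨k j + Pi.single i₁ (j * m), by
      have := Nat.mul_le_mul_right (m * w i₁) j.2.le
      rw [sum_add_single_mul, hk, mul_assoc]
      omega⟩ : {k : ι → ℕ // ∑ i, k i * w i = n}))
    fun j j' hjj' => Fin.ext <| by
      rw [← hval j, ← hval j']
      exact congrArg (fun k : {k : ι → ℕ // _} => k.1 i₁ / m) hjj'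

theorem bddAbove_repCount_lt (hm : 0 < m) (hgcd : univ.gcd w = 1) (hw : ∀ i, 0 < w i)
    (him : w iₘ = m) {t n : ℕ} (hn : t ≤ repCount w n) :
    BddAbove {x | repCount w x < t} := by
  by_cases hι : ∀ i, i = iₘ
  · -- a single weight: then `m = 1` and every `x` has exactly one representation
    have hm1 : m = 1 := Nat.dvd_one.mp <| hgcd ▸ Finset.dvd_gcd fun i _ => by rw [hι i, him]
    have hsum (k : ι → ℕ) : ∑ i, k i * w i = k iₘ := by
      rw [sum_eq_single iₘ (fun i _ hi => absurd (hι i) hi) (by simp), him, hm1, mul_one]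
    have hone (x : ℕ) : repCount w x = 1 :=
      Nat.card_eq_one_iff_unique.mpr ⟨⟨fun k k' => Subtype.ext <| funext fun i => by
        rw [hι i, ← hsum k.1, ← hsum k'.1, k.2, k'.2]⟩, ⟨⟨fun _ => x, by rw [hsum]⟩⟩⟩
    refine ⟨0, fun x (hx : repCount w x < t) => ?_⟩
    rw [hone] at hx hn
    omega
  · obtain ⟨i₁, hne⟩ := not_forall.mp hι
    exact ⟨_, fun x hx => not_lt.mp fun hlt =>
      (le_repCount_of_le w hm hgcd hw him hne hlt.le).not_gt hx⟩

theorem le_repCount_of_sSup_lt (hm : 0 < m) (hgcd : univ.gcd w = 1) (hw : ∀ i, 0 < w i)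
    (him : w iₘ = m) {t n : ℕ} (hn : t ≤ repCount w n) {x : ℕ}
    (hx : sSup {x | repCount w x < t} < x) : t ≤ repCount w x :=
  not_lt.mp fun hlt => hx.not_ge (le_csSup (bddAbove_repCount_lt w hm hgcd hw him hn) hlt)

/-- `q` copies of `m` are stripped from `n` to land in `(F, F + m]` (or `q = 0` if `n ≤ F`). -/
theorem exists_le_repCountLe (hw : ∀ i, 0 < w i) (hm : 0 < m) (him : w iₘ = m) {w₀ : ℕ}
    (hw₀ : 0 < w₀) (hw₀w : ∀ i, w₀ ≤ w i) {F t n : ℕ}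
    (hF : ∀ x, F < x → t ≤ repCount w x) (hn : t ≤ repCount w n) :
    ∃ q, (q = 0 ∨ q * m < n) ∧ t ≤ repCountLe w ((F + m) / w₀ + q) n := by
  obtain ⟨q, hqle, hqlt⟩ : ∃ q, q * m ≤ n - (F + 1) ∧ n - (F + 1) < q * m + m :=
    ⟨_, Nat.div_mul_le_self _ _, Nat.lt_div_mul_add hm⟩
  have hx : t ≤ repCount w (n - q * m) := by
    rcases Nat.eq_zero_or_pos q with hq | hq
    · simpa [hq] using hn
    · exact hF _ (by have := Nat.le_mul_of_pos_left m hq; omega)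
  have hbound (k : ι → ℕ) (hk : ∑ i, k i * w i = n - q * m) : ∑ i, k i ≤ (F + m) / w₀ := by
    rw [Nat.le_div_iff_mul_le hw₀, mul_comm]
    have := mul_sum_le_sum_mul w hw₀w k
    omega
  refine ⟨q, ?_, ?_⟩
  · rcases Nat.eq_zero_or_pos q with hq | hq
    · exact .inl hq
    · exact .inr (by have := Nat.le_mul_of_pos_left m hq; omega)
  · calc t ≤ repCountLe w ((F + m) / w₀) (n - q * m) :=
          (repCountLe_eq_repCount w hbound).ge.trans' hx
      _ ≤ repCountLe w ((F + m) / w₀ + q) (n - q * m + q * w iₘ) :=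
        repCountLe_le_repCountLe_add w hw iₘ _ _ q
      _ = repCountLe w ((F + m) / w₀ + q) n := by rw [him]; congr 1; omega

end RepCount

open RepCount

theorem gcd_shift_eq_one {ℓ : ℕ} {a : ℕ → ℕ} (ha0 : a 0 = 0)
    (hgcd : (range (ℓ + 2)).gcd a = 1) : univ.gcd (fun i : Fin (ℓ + 1) => a (i + 1)) = 1 := by
  suffices h : univ.gcd (fun i : Fin (ℓ + 1) => a (i + 1)) ∣ (range (ℓ + 2)).gcd a by
    rwa [hgcd, Nat.dvd_one] at h
  refine Finset.dvd_gcd fun j hj => ?_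
  rcases j with _ | j
  · simp [ha0]
  · exact Finset.gcd_dvd (f := fun i : Fin (ℓ + 1) => a (i + 1))
      (mem_univ ⟨j, by rw [mem_range] at hj; omega⟩)

theorem gcd_reflect_eq_one {ℓ m : ℕ} {a : ℕ → ℕ} (ha0 : a 0 = 0) (ham : a (ℓ + 1) = m)
    (hle : ∀ i ≤ ℓ + 1, a i ≤ m) (hgcd : (range (ℓ + 2)).gcd a = 1) :
    univ.gcd (fun i : Fin (ℓ + 1) => m - a i) = 1 := by
  set d := univ.gcd (fun i : Fin (ℓ + 1) => m - a i)
  have hd (i : Fin (ℓ + 1)) : d ∣ m - a i := Finset.gcd_dvd (mem_univ i)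
  have hdm : d ∣ m := by simpa [ha0] using hd 0
  suffices h : d ∣ (range (ℓ + 2)).gcd a by rwa [hgcd, Nat.dvd_one] at h
  refine Finset.dvd_gcd fun j hj => ?_
  rw [mem_range] at hj
  rcases Nat.lt_succ_iff_lt_or_eq.mp hj with hj | rfl
  · have := (Nat.dvd_sub_iff_right (Nat.sub_le m (a j)) hdm).mpr (hd ⟨j, hj⟩)
    rwa [Nat.sub_sub_self (hle j hj.le)] at this
  · exact ham ▸ hdm

theorem add_le_or_add_le {m n h h₁ h₂ q q' : ℕ} (hh : h₁ + h₂ ≤ h)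
    (hq : q = 0 ∨ q * m < n) (hq' : q' = 0 ∨ q' * m < h * m - n) :
    h₁ + q ≤ h ∨ h₂ + q' ≤ h := by
  by_contra! hcon
  rcases hq with rfl | hq
  · omega
  rcases hq' with rfl | hq'
  · omega
  have hlt : (q + q') * m < h * m := by rw [add_mul]; omega
  have := Nat.lt_of_mul_lt_mul_right hlt
  omega

/-- Theorem MT1: for `h ≥ ⌊(Fr_t(A)+m)/a₁⌋ + ⌊(Fr_t(m−A)+m)/(m−a_ℓ)⌋`, the set
`(hA)^{(t)}` equals `[0,hm] ∖ (E_t(A) ∪ (hm − E_t(m−A)))`; i.e. `n ∈ (hA)^{(t)}` iff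
`n ≤ hm`, `ρ_A(n) ≥ t` and `ρ_{m−A}(hm−n) ≥ t`. -/
theorem stmt_10 (ℓ m : ℕ) (a : ℕ → ℕ)
    (ha0 : a 0 = 0) (ham : a (ℓ + 1) = m)
    (hmono : ∀ i ≤ ℓ, a i < a (i + 1))
    (hgcd : Finset.gcd (Finset.range (ℓ + 2)) a = 1)
    (t : ℕ) (ht : 1 ≤ t)
    (FrA FrmA : ℕ)
    (hFrA : FrA = sSup {n : ℕ |
        Nat.card {k : Fin (ℓ + 1) → ℕ // ∑ i, k i * a (i.val + 1) = n} < t})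
    (hFrmA : FrmA = sSup {n : ℕ |
        Nat.card {k : Fin (ℓ + 1) → ℕ // ∑ i, k i * (m - a i.val) = n} < t})
    (h : ℕ) (hh : (FrA + m) / (a 1) + (FrmA + m) / (m - a ℓ) ≤ h) (n : ℕ) :
    t ≤ Nat.card {K : Fin (ℓ + 1) → ℕ //
          ∑ i, K i * a (i.val + 1) = n ∧ ∑ i, K i ≤ h}
      ↔ (n ≤ h * m
          ∧ t ≤ Nat.card {k : Fin (ℓ + 1) → ℕ // ∑ i, k i * a (i.val + 1) = n}
          ∧ t ≤ Nat.card {k : Fin (ℓ + 1) → ℕ //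
              ∑ i, k i * (m - a i.val) = h * m - n}) := by
  set b : Fin (ℓ + 1) → ℕ := fun i => a (i + 1)
  set c : Fin (ℓ + 1) → ℕ := fun i => m - a i
  change t ≤ repCountLe b h n ↔ n ≤ h * m ∧ t ≤ repCount b n ∧ t ≤ repCount c (h * m - n)
  have hmon {i j} (hij : i ≤ j) (hj : j ≤ ℓ + 1) : a i ≤ a j :=
    (strictMonoOn_Iic_of_lt_succ fun i hi => by simpa using hmono i (by omega)).monotoneOn
      (hij.trans hj) hj hij
  have ha1 : 0 < a 1 := ha0 ▸ hmono 0 (Nat.zero_le _)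
  have haℓ : 0 < m - a ℓ := Nat.sub_pos_of_lt (ham ▸ hmono ℓ le_rfl)
  have hle (i) (hi : i ≤ ℓ + 1) : a i ≤ m := ham ▸ hmon hi le_rfl
  have hm : 0 < m := ha1.trans_le (hle 1 (by omega))
  have hb (i : Fin (ℓ + 1)) : a 1 ≤ b i := hmon (by omega) (by omega)
  have hc (i : Fin (ℓ + 1)) : m - a ℓ ≤ c i :=
    Nat.sub_le_sub_left (hmon (by omega) (by omega)) m
  have hbpos (i) : 0 < b i := ha1.trans_le (hb i)
  have hcpos (i) : 0 < c i := haℓ.trans_le (hc i)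
  have hc0 : c 0 = m := by simp [c, ha0]
  have hreflect (hn : n ≤ h * m) := repCountLe_reflect a ha0 ham hle hn
  constructor
  · intro hL
    have hn : n ≤ h * m := le_mul_of_repCountLe_pos b (fun i => hle _ (by omega)) (by omega)
    exact ⟨hn, hL.trans (repCountLe_le_repCount b hbpos h n),
      (hreflect hn ▸ hL).trans (repCountLe_le_repCount c hcpos h _)⟩
  · rintro ⟨hn, hA, hC⟩
    have hFA (x) (hx : FrA < x) : t ≤ repCount b x :=
      le_repCount_of_sSup_lt b hm (gcd_shift_eq_one ha0 hgcd) hbpos (iₘ := Fin.last ℓ) ham hA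
        (hFrA ▸ hx)
    have hFC (x) (hx : FrmA < x) : t ≤ repCount c x :=
      le_repCount_of_sSup_lt c hm (gcd_reflect_eq_one ha0 ham hle hgcd) hcpos hc0 hC (hFrmA ▸ hx)
    obtain ⟨qA, hqA, hA⟩ := exists_le_repCountLe b hbpos hm (iₘ := Fin.last ℓ) ham ha1 hb hFA hA
    obtain ⟨qC, hqC, hC⟩ := exists_le_repCountLe c hcpos hm hc0 haℓ hc hFC hC
    rcases add_le_or_add_le hh hqA hqC with hA' | hC'
    · exact hA.trans (repCountLe_mono b hbpos n hA')
    · exact hreflect hn ▸ hC.trans (repCountLe_mono c hcpos _ hC')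
end

section
/- Let m ≥ 5, 2 ≤ ℓ ≤ m/2, 0 ≤ R ≤ (m−ℓ)/(ℓ−1), A := {0,1,m−ℓ+1,…,m}, and t := C(ℓ+R, R). Then ρ_A(mR) ≥ t and ρ_{m−A}(mR) ≥ t; consequently E_t(A) and E_t(m−A) are contained in [0, mR−1]. -/
/-- Total representation function of `A = {0, 1, m−ℓ+1, …, m}`: coefficients on the
nonzero elements `1, m−ℓ+1, …, m`. -/
noncomputable def rhoA (m ℓ n : ℕ) : ℕ :=
  Nat.card {k : Fin (ℓ + 1) → ℕ //
    k 0 * 1 + (∑ i : Fin ℓ, k i.succ * (m - ℓ + 1 + i.val)) = n}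

/-- Total representation function of `m − A = {0, 1, …, ℓ−1, m−1, m}`: coefficients on
the nonzero elements `1, …, ℓ−1, m−1, m`. -/
noncomputable def rhomA (m ℓ n : ℕ) : ℕ :=
  Nat.card {k : Fin (ℓ + 1) → ℕ //
    ∑ i : Fin (ℓ + 1), k i *
      (if i.val < ℓ - 1 then i.val + 1 else if i.val = ℓ - 1 then m - 1 else m) = n}


/-!
Write the weights as `w 0 = 1` together with `q` further weights, each at most `m`. A tuple of
coefficients `c` on the further weights with `∑ c i ≤ R` contributes at most `m * R ≤ n`, and the
coefficient of the weight `1` fills up the rest, so every such `c` extends to a representation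
of `n`. By stars and bars there are `C(q + R, R)` such tuples; for `A` and for `m − A` the
weight `1` is present and `q = ℓ`.
-/

open Finset

noncomputable def repCount {ι : Type*} [Fintype ι] (w : ι → ℕ) (n : ℕ) : ℕ :=
  Nat.card {k : ι → ℕ // ∑ i, k i * w i = n}

lemma finite_reps {ι : Type*} [Fintype ι] {w : ι → ℕ} (hw : ∀ i, 0 < w i) (n : ℕ) :
    Finite {k : ι → ℕ // ∑ i, k i * w i = n} := by
  refine Set.Finite.to_subtype ((Set.Finite.pi' fun _ => Set.finite_Iic n).subset ?_)
  rintro k (hk : ∑ i, k i * w i = n) i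
  calc k i ≤ k i * w i := Nat.le_mul_of_pos_right _ (hw i)
    _ ≤ ∑ j, k j * w j := single_le_sum (fun j _ => Nat.zero_le (k j * w j)) (mem_univ i)
    _ = n := hk

lemma card_sum_le_eq_choose (q R : ℕ) :
    Nat.card {c : Fin q → ℕ // ∑ i, c i ≤ R} = (q + R).choose R := by
  have e : {c : Fin q → ℕ // ∑ i, c i ≤ R} ≃ {P : Fin (q + 1) → ℕ // ∑ i, P i = R} :=
    { toFun := fun c => ⟨Fin.cons (R - ∑ i, c.1 i) c.1, by
        simp only [Fin.sum_univ_succ, Fin.cons_zero, Fin.cons_succ]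
        exact Nat.sub_add_cancel c.2⟩
      invFun := fun P => ⟨Fin.tail P.1, by
        have := P.2; rw [Fin.sum_univ_succ] at this; simp only [Fin.tail]; omega⟩
      left_inv := fun c => rfl
      right_inv := fun P => by
        have h0 : R - ∑ i, Fin.tail P.1 i = P.1 0 := by
          have := P.2; rw [Fin.sum_univ_succ] at this; simp only [Fin.tail]; omega
        ext1
        simp only [h0, Fin.cons_self_tail] }
  rw [Nat.card_congr (e.trans (Sym.equivNatSumOfFintype (Fin (q + 1)) R).symm),
    Nat.card_eq_fintype_card, Sym.card_sym_eq_choose, Fintype.card_fin, Nat.add_right_comm,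
    Nat.add_sub_cancel]

lemma choose_le_repCount {q m R n : ℕ} {w : Fin (q + 1) → ℕ} (hw0 : w 0 = 1)
    (hw_pos : ∀ i, 0 < w i) (hw_le : ∀ i, w i ≤ m) (hn : m * R ≤ n) :
    (q + R).choose R ≤ repCount w n := by
  have := finite_reps hw_pos n
  have hrest (c : {c : Fin q → ℕ // ∑ i, c i ≤ R}) : ∑ i, c.1 i * w i.succ ≤ n :=
    calc ∑ i, c.1 i * w i.succ ≤ ∑ i, c.1 i * m :=
          sum_le_sum fun i _ => Nat.mul_le_mul_left _ (hw_le _)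
      _ = (∑ i, c.1 i) * m := (sum_mul ..).symm
      _ ≤ R * m := by gcongr; exact c.2
      _ ≤ n := by rwa [Nat.mul_comm]
  rw [← card_sum_le_eq_choose q R]
  refine Nat.card_le_card_of_injective
    (fun c => ⟨Fin.cons (n - ∑ i, c.1 i * w i.succ) c.1, ?_⟩) fun a b h => ?_
  · simp only [Fin.sum_univ_succ, Fin.cons_zero, Fin.cons_succ, hw0, Nat.mul_one]
    exact Nat.sub_add_cancel (hrest c)
  · ext1
    simpa using congrArg (Fin.tail ∘ Subtype.val) h

lemma rhoA_eq_repCount (m ℓ n : ℕ) :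
    rhoA m ℓ n = repCount (Fin.cons 1 fun j : Fin ℓ => m - ℓ + 1 + j.val) n := by
  simp only [rhoA, repCount, Fin.sum_univ_succ, Fin.cons_zero, Fin.cons_succ]

lemma choose_le_rhoA {m ℓ R n : ℕ} (hm : 0 < m) (hℓm : ℓ ≤ m) (hn : m * R ≤ n) :
    (ℓ + R).choose R ≤ rhoA m ℓ n := by
  rw [rhoA_eq_repCount]
  refine choose_le_repCount rfl (fun i => ?_) (fun i => ?_) hn <;>
    cases i using Fin.cases <;> simp only [Fin.cons_zero, Fin.cons_succ] <;> omega

lemma choose_le_rhomA {m ℓ R n : ℕ} (hl : 2 ≤ ℓ) (hℓm : ℓ ≤ m) (hn : m * R ≤ n) :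
    (ℓ + R).choose R ≤ rhomA m ℓ n :=
  choose_le_repCount (if_pos (show 0 < ℓ - 1 by omega)) (fun i => by split_ifs <;> omega)
    (fun i => by have := i.isLt; split_ifs <;> omega) hn

theorem stmt_11_general (m ℓ R : ℕ) (hl : 2 ≤ ℓ) (hlm : 2 * ℓ ≤ m)
    (t : ℕ) (ht : t = (ℓ + R).choose R) :
    t ≤ rhoA m ℓ (m * R) ∧ t ≤ rhomA m ℓ (m * R) ∧
    (∀ n : ℕ, rhoA m ℓ n < t → n < m * R) ∧
    (∀ n : ℕ, rhomA m ℓ n < t → n < m * R) := by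
  subst ht
  have hm : 0 < m := by omega
  have hℓm : ℓ ≤ m := by omega
  exact ⟨choose_le_rhoA hm hℓm le_rfl, choose_le_rhomA hl hℓm le_rfl,
    fun n hn => lt_of_not_ge fun h => (choose_le_rhoA hm hℓm h).not_gt hn,
    fun n hn => lt_of_not_ge fun h => (choose_le_rhomA hl hℓm h).not_gt hn⟩

/-- For `A = {0,1,m−ℓ+1,…,m}` and `t = C(ℓ+R,R)`, both `mR` has at least `t`
representations by `A` and by `m−A`; consequently `E_t(A), E_t(m−A) ⊆ [0, mR−1]`. -/
theorem stmt_11 (m ℓ R : ℕ) (hm : 5 ≤ m) (hl : 2 ≤ ℓ) (hlm : 2 * ℓ ≤ m)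
    (hR : (ℓ - 1) * R ≤ m - ℓ) (t : ℕ) (ht : t = (ℓ + R).choose R) :
    t ≤ rhoA m ℓ (m * R) ∧ t ≤ rhomA m ℓ (m * R) ∧
    (∀ n : ℕ, rhoA m ℓ n < t → n < m * R) ∧
    (∀ n : ℕ, rhomA m ℓ n < t → n < m * R) :=
  stmt_11_general m ℓ R hl hlm t ht
end

section
/- Let a, m ≥ 2 with gcd(a,m) = 1 and A = {0, a, m}. For any n ≥ 0, the number ρ_A(n) of pairs (u,v) ∈ (ℤ≥0)² with au + mv = n equals n/(am) − {n·a⁻¹/m} − {n·m⁻¹/a} + 1, where {x} denotes the fractional part, a⁻¹ is an inverse of a mod m, and m⁻¹ is an inverse of m mod a. -/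
/-!
Put `u₀ = n·a⁻¹ mod m` and `v₀ = n·m⁻¹ mod a`. Every solution of `au + mv = n` has
`u ≡ u₀ (mod m)` and `v ≡ v₀ (mod a)`, so it is `(u₀ + km, v₀ + la)` with `k, l ≥ 0`, and then
`am(k + l) = n - au₀ - mv₀`. By the Chinese remainder theorem this right-hand side is `am·t` with
`t ≥ -1` (as `au₀ + mv₀ < 2am`), so there are exactly `t + 1` solutions, and
`t + 1 = n/(am) - u₀/m - v₀/a + 1`, where `u₀/m` and `v₀/a` are the two fractional parts.
-/

namespace Popoviciu

variable {a m n : ℕ}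

theorem mul_mod_modEq_of_mul_modEq_one {ainv : ℕ} (hinv : a * ainv ≡ 1 [MOD m]) (n : ℕ) :
    a * (n * ainv % m) ≡ n [MOD m] :=
  calc a * (n * ainv % m) ≡ a * (n * ainv) [MOD m] := (Nat.mod_modEq _ m).mul_left a
    _ = a * ainv * n := by ring
    _ ≡ 1 * n [MOD m] := hinv.mul_right n
    _ = n := one_mul n

theorem mod_eq_of_mul_add_mul_eq (hcop : a.Coprime m) {u u₀ v w : ℕ} (hu₀ : u₀ < m)
    (h : a * u + m * v = a * u₀ + m * w) : u % m = u₀ := by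
  have hmod : a * u ≡ a * u₀ [MOD m] := by
    simpa only [Nat.ModEq, Nat.add_mul_mod_self_left] using congrArg (· % m) h
  exact Eq.trans (hmod.cancel_left_of_coprime hcop.symm) (Nat.mod_eq_of_lt hu₀)

-- `N` is the `t + 1` of the header; shifting by `am` keeps it a natural number.
theorem card_solutions_of_add_mul_eq (hcop : a.Coprime m) {u₀ v₀ N : ℕ} (hu₀ : u₀ < m)
    (hv₀ : v₀ < a)
    (h : n + a * m = a * u₀ + m * v₀ + a * m * N) :
    Nat.card {p : ℕ × ℕ // a * p.1 + m * p.2 = n} = N := by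
  have ham : 0 < a * m := Nat.mul_pos (by omega) (by omega)
  set f : ℕ → ℕ × ℕ := fun k => (u₀ + k * m, v₀ + (N - 1 - k) * a)
  have hf : Function.Injective f := fun k₁ k₂ hk => by
    have := congrArg Prod.fst hk
    simp only [f, add_right_inj] at this
    exact Nat.eq_of_mul_eq_mul_right (by omega) this
  have hsol : {p : ℕ × ℕ | a * p.1 + m * p.2 = n} = (Finset.range N).image f := by
    ext ⟨u, v⟩
    simp only [Set.mem_ofPred_eq, Finset.coe_image, Finset.coe_range, Set.mem_image,
      Set.mem_Iio, Prod.mk.injEq, f]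
    constructor
    · rintro rfl
      have hu : u % m = u₀ := mod_eq_of_mul_add_mul_eq hcop hu₀ (v := v + a) (w := v₀ + a * N)
        (by linarith)
      have hv : v % a = v₀ :=
        mod_eq_of_mul_add_mul_eq hcop.symm hv₀ (v := u + m) (w := u₀ + m * N) (by linarith)
      obtain ⟨k, rfl⟩ : ∃ k, u = u₀ + k * m := ⟨u / m, by rw [← hu, mul_comm, Nat.mod_add_div]⟩
      obtain ⟨l, rfl⟩ : ∃ l, v = v₀ + l * a := ⟨v / a, by rw [← hv, mul_comm, Nat.mod_add_div]⟩
      have hN : N = k + l + 1 := Nat.eq_of_mul_eq_mul_left ham (by linarith)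
      exact ⟨k, by omega, rfl, by rw [hN]; congr; omega⟩
    · rintro ⟨k, hk, rfl, rfl⟩
      obtain ⟨l, rfl⟩ : ∃ l, N = k + l + 1 := ⟨N - 1 - k, by omega⟩
      rw [show k + l + 1 - 1 - k = l by omega]
      linarith
  rw [← Set.coe_ofPred, Nat.card_coe_set_eq, hsol, Set.ncard_coe_finset,
    Finset.card_image_of_injective _ hf, Finset.card_range]

theorem exists_add_mul_eq_of_modEq (hcop : a.Coprime m) {u₀ v₀ : ℕ} (hu₀ : u₀ < m)
    (hv₀ : v₀ < a)
    (hu : a * u₀ ≡ n [MOD m]) (hv : m * v₀ ≡ n [MOD a]) :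
    ∃ N, n + a * m = a * u₀ + m * v₀ + a * m * N := by
  have hmod : a * u₀ + m * v₀ ≡ n + a * m [MOD a * m] := by
    refine (Nat.modEq_and_modEq_iff_modEq_mul hcop).1 ⟨?_, ?_⟩
    · simpa [Nat.ModEq, Nat.add_mod] using hv
    · simpa [Nat.ModEq, Nat.add_mod] using hu
  obtain ⟨t, ht⟩ := Nat.modEq_iff_dvd.1 hmod
  push_cast at ht
  have hlt : a * u₀ + m * v₀ < 2 * (a * m) := by nlinarith
  have ht0 : 0 ≤ t := by
    by_contra! h
    have : (a * m : ℤ) * t ≤ a * m * (-1) := mul_le_mul_of_nonneg_left (by omega) (by positivity)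
    have : (a * u₀ + m * v₀ : ℤ) < 2 * (a * m) := by exact_mod_cast hlt
    linarith
  lift t to ℕ using ht0
  exact ⟨t, by exact_mod_cast (by linarith : (n + a * m : ℤ) = a * u₀ + m * v₀ + a * m * t)⟩

end Popoviciu

/-- Popoviciu's formula: for coprime `a, m ≥ 2`, the number of pairs `(u,v)` of
nonnegative integers with `au + mv = n` equals
`n/(am) − {n·a⁻¹/m} − {n·m⁻¹/a} + 1`. -/
theorem stmt_15 (a m : ℕ) (ha : 2 ≤ a) (hm : 2 ≤ m) (hcop : Nat.Coprime a m)
    (ainv minv : ℕ) (hainv : a * ainv ≡ 1 [MOD m]) (hminv : m * minv ≡ 1 [MOD a])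
    (n : ℕ) :
    (Nat.card {p : ℕ × ℕ // a * p.1 + m * p.2 = n} : ℝ)
      = (n : ℝ) / (a * m)
        - Int.fract ((n * ainv : ℝ) / m)
        - Int.fract ((n * minv : ℝ) / a) + 1 := by
  have hu₀ : n * ainv % m < m := Nat.mod_lt _ (by omega)
  have hv₀ : n * minv % a < a := Nat.mod_lt _ (by omega)
  obtain ⟨N, hN⟩ := Popoviciu.exists_add_mul_eq_of_modEq hcop hu₀ hv₀
    (Popoviciu.mul_mod_modEq_of_mul_modEq_one hainv n)
    (Popoviciu.mul_mod_modEq_of_mul_modEq_one hminv n)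
  rw [Popoviciu.card_solutions_of_add_mul_eq hcop hu₀ hv₀ hN, ← Nat.cast_mul n ainv,
    ← Nat.cast_mul n minv, Int.fract_div_natCast_eq_div_natCast_mod,
    Int.fract_div_natCast_eq_div_natCast_mod]
  have hNR : (n + a * m : ℝ) = a * ↑(n * ainv % m) + m * ↑(n * minv % a) + a * m * N := by
    exact_mod_cast hN
  field_simp
  linarith
end

section
/- Let a, m ≥ 2 with gcd(a,m)=1, A = {0,a,m}, and t ≥ 1. Then P_t(A) = (t−1)am + P(A), where P_t(A) := {n ∈ ℤ≥0 : ρ_A(n) ≥ t} and P(A) = P₁(A) is the numerical semigroup generated by a and m. Consequently, E_t(A) = [0, (t−1)am − 1] ∪ ((t−1)am + E(A)). -/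
/-!
Among the solutions of `a u + m v = N`, at most one has `u < m` (since `a` is invertible
modulo `m`), and one exists as soon as `N ≥ a (m - 1)`. The solutions of `N + a m` are therefore
the solutions of `N` shifted by `(m, 0)` together with exactly one new solution, so
`ρ(N + a m) = ρ(N) + 1`, while `ρ(N) ≤ 1` for `N < a m`. Hence `ρ(N) ≤ t - 1` below `(t - 1) a m`
and `ρ((t - 1) a m + n₀) = ρ(n₀) + t - 1`, which gives both descriptions.
-/

/-- `ρ_A(n)`: number of pairs `(u,v)` of nonnegative integers with `au + mv = n`. -/
noncomputable def rho (a m n : ℕ) : ℕ := Nat.card {p : ℕ × ℕ // a * p.1 + m * p.2 = n}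

namespace rho

def solutions (a m n : ℕ) : Set (ℕ × ℕ) := {p | a * p.1 + m * p.2 = n}

variable {a m : ℕ}

theorem eq_ncard_solutions (n : ℕ) : rho a m n = (solutions a m n).ncard := rfl

theorem solutions_finite (ha : 0 < a) (hm : 0 < m) (n : ℕ) : (solutions a m n).Finite :=
  ((Set.finite_Iic n).prod (Set.finite_Iic n)).subset fun p (hp : a * p.1 + m * p.2 = n) =>
    ⟨(Nat.le_mul_of_pos_left _ ha).trans (hp ▸ Nat.le_add_right _ _),
      (Nat.le_mul_of_pos_left _ hm).trans (hp ▸ Nat.le_add_left _ _)⟩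

theorem exists_mem_solutions_fst_lt (hcop : a.Coprime m) (hm : 0 < m) {n : ℕ}
    (hn : a * (m - 1) ≤ n) : ∃ p ∈ solutions a m n, p.1 < m := by
  obtain ⟨u, hu, hmod⟩ := Nat.exists_mul_mod_eq_of_coprime n hcop hm.ne'
  have hle : a * u ≤ n := (Nat.mul_le_mul_left a (Nat.le_sub_one_of_lt hu)).trans hn
  obtain ⟨v, hv⟩ := (Nat.modEq_iff_dvd' hle).mp hmod
  exact ⟨(u, v), show a * u + m * v = n by omega, hu⟩

theorem eq_of_mem_solutions_of_fst_lt (hcop : a.Coprime m) {n : ℕ} {p q : ℕ × ℕ}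
    (hp : p ∈ solutions a m n) (hq : q ∈ solutions a m n) (hpm : p.1 < m) (hqm : q.1 < m) :
    p = q := by
  have hmod : a * p.1 ≡ a * q.1 [MOD m] := by
    have h : (a * p.1 + m * p.2) % m = (a * q.1 + m * q.2) % m := by rw [hp, hq]
    simpa only [Nat.ModEq, Nat.add_mul_mod_self_left] using h
  have h1 : p.1 = q.1 :=
    (hmod.cancel_left_of_coprime (Nat.coprime_comm.mp hcop)).eq_of_lt_of_lt hpm hqm
  have h2 : p.2 = q.2 := by
    have hpq : a * p.1 + m * p.2 = a * q.1 + m * q.2 := hp.trans hq.symm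
    rw [h1, Nat.add_left_cancel_iff] at hpq
    exact Nat.eq_of_mul_eq_mul_left (by omega) hpq
  exact Prod.ext h1 h2

theorem le_one_of_lt_mul (ha : 0 < a) (hm : 0 < m) (hcop : a.Coprime m) {n : ℕ}
    (hn : n < a * m) : rho a m n ≤ 1 := by
  have fst_lt {p : ℕ × ℕ} (hp : p ∈ solutions a m n) : p.1 < m :=
    Nat.lt_of_mul_lt_mul_left (a := a) ((Nat.le_add_right _ _).trans_lt (hp.symm ▸ hn))
  rw [eq_ncard_solutions, Set.ncard_le_one (solutions_finite ha hm n)]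
  exact fun p hp q hq => eq_of_mem_solutions_of_fst_lt hcop hp hq (fst_lt hp) (fst_lt hq)

theorem add_mul_mul (ha : 0 < a) (hm : 0 < m) (hcop : a.Coprime m) (n : ℕ) :
    rho a m (n + a * m) = rho a m n + 1 := by
  obtain ⟨p₀, hp₀, hp₀m⟩ := exists_mem_solutions_fst_lt hcop hm (n := n + a * m)
    ((Nat.mul_le_mul_left a (Nat.sub_le m 1)).trans (Nat.le_add_left _ _))
  set shift : ℕ × ℕ → ℕ × ℕ := Prod.map (· + m) id
  have hsplit : solutions a m (n + a * m) = insert p₀ (shift '' solutions a m n) := by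
    ext q
    constructor
    · intro hq
      rcases lt_or_ge q.1 m with hqm | hqm
      · exact Or.inl (eq_of_mem_solutions_of_fst_lt hcop hq hp₀ hqm hp₀m)
      · refine Or.inr ⟨(q.1 - m, q.2), ?_, Prod.ext (Nat.sub_add_cancel hqm) rfl⟩
        have hq' : a * q.1 + m * q.2 = n + a * m := hq
        have hsub : a * (q.1 - m) + a * m = a * q.1 := by
          rw [← mul_add, Nat.sub_add_cancel hqm]
        show a * (q.1 - m) + m * q.2 = n
        omega
    · rintro (rfl | ⟨p, hp, rfl⟩)
      · exact hp₀
      · show a * (p.1 + m) + m * p.2 = n + a * m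
        rw [← show a * p.1 + m * p.2 = n from hp]
        ring
  have hp₀_notMem : p₀ ∉ shift '' solutions a m n := by
    rintro ⟨p, -, rfl⟩
    simp [shift] at hp₀m
  rw [eq_ncard_solutions, eq_ncard_solutions, hsplit,
    Set.ncard_insert_of_notMem hp₀_notMem ((solutions_finite ha hm n).image shift),
    Set.ncard_image_of_injective _ ((add_left_injective m).prodMap Function.injective_id)]

theorem add_mul_mul_mul (ha : 0 < a) (hm : 0 < m) (hcop : a.Coprime m) (n k : ℕ) :
    rho a m (n + k * (a * m)) = rho a m n + k := by
  induction k with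
  | zero => simp
  | succ k ih => rw [add_one_mul, ← add_assoc, add_mul_mul ha hm hcop, ih, add_assoc]

theorem le_of_lt_mul (ha : 0 < a) (hm : 0 < m) (hcop : a.Coprime m) {n k : ℕ}
    (hn : n < k * (a * m)) : rho a m n ≤ k := by
  induction k generalizing n with
  | zero => simp at hn
  | succ k ih =>
    rcases lt_or_ge n (a * m) with hlt | hge
    · exact (le_one_of_lt_mul ha hm hcop hlt).trans (Nat.le_add_left 1 k)
    · obtain ⟨n', rfl⟩ := Nat.exists_eq_add_of_le' hge
      rw [add_mul_mul ha hm hcop]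
      exact Nat.add_le_add_right (ih (by rw [add_one_mul] at hn; omega)) 1

end rho

/-- `P_t(A) = (t−1)am + P(A)` for `A = {0,a,m}` with `gcd(a,m)=1`; consequently
`E_t(A) = [0,(t−1)am−1] ∪ ((t−1)am + E(A))`. -/
theorem stmt_16 (a m : ℕ) (ha : 2 ≤ a) (hm : 2 ≤ m) (hcop : Nat.Coprime a m)
    (t : ℕ) (ht : 1 ≤ t) :
    (∀ n : ℕ, t ≤ rho a m n ↔ ∃ n₀ : ℕ, 1 ≤ rho a m n₀ ∧ n = (t - 1) * a * m + n₀) ∧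
    (∀ n : ℕ, rho a m n < t ↔
        (n < (t - 1) * a * m ∨ ∃ n₀ : ℕ, rho a m n₀ = 0 ∧ n = (t - 1) * a * m + n₀)) := by
  have ha₀ : 0 < a := by omega
  have hm₀ : 0 < m := by omega
  have shifted (n₀ : ℕ) : rho a m ((t - 1) * a * m + n₀) = rho a m n₀ + (t - 1) := by
    rw [add_comm, mul_assoc, rho.add_mul_mul_mul ha₀ hm₀ hcop]
  have below {n : ℕ} (hn : n < (t - 1) * a * m) : rho a m n < t :=
    (rho.le_of_lt_mul ha₀ hm₀ hcop (by rwa [← mul_assoc])).trans_lt (by omega)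
  have not_shifted {n : ℕ} (hn : n < (t - 1) * a * m) {P : ℕ → Prop} :
      ¬∃ n₀, P n₀ ∧ n = (t - 1) * a * m + n₀ := by
    rintro ⟨n₀, -, rfl⟩
    omega
  refine ⟨fun n => ?_, fun n => ?_⟩ <;> rcases lt_or_ge n ((t - 1) * a * m) with hn | hn
  · exact iff_of_false (by have := below hn; omega) (not_shifted hn)
  · obtain ⟨k, rfl⟩ := Nat.exists_eq_add_of_le hn
    simp only [shifted, add_right_inj, exists_eq_right']
    omega
  · exact iff_of_true (below hn) (Or.inl hn)
  · obtain ⟨k, rfl⟩ := Nat.exists_eq_add_of_le hn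
    simp only [shifted, add_right_inj, exists_eq_right']
    omega
end

section
/- Let a, m ≥ 2 with gcd(a,m)=1, A = {0,a,m}, and t ≥ 1. Then Fr_t(A) = t·am − a − m, i.e., t·am − a − m has fewer than t representations au+mv (u,v ≥ 0), while every larger integer has at least t such representations. -/
lemma rho_eq_ncard (a m n : ℕ) : rho a m n = {p : ℕ × ℕ | a * p.1 + m * p.2 = n}.ncard :=
  Nat.card_coe_set_eq _

lemma finite_setOf_mul_add_mul_eq {a m : ℕ} (ha : 0 < a) (hm : 0 < m) (n : ℕ) :
    {p : ℕ × ℕ | a * p.1 + m * p.2 = n}.Finite :=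
  (Set.finite_Iic (n, n)).subset fun p (hp : a * p.1 + m * p.2 = n) =>
    ⟨show p.1 ≤ n by nlinarith, show p.2 ≤ n by nlinarith⟩

lemma exists_lt_mul_modEq {a m : ℕ} (hcop : a.Coprime m) (hm : 0 < m) (n : ℕ) :
    ∃ u < m, a * u ≡ n [MOD m] := by
  have : NeZero m := ⟨hm.ne'⟩
  refine ⟨((n : ZMod m) * (a : ZMod m)⁻¹).val, ZMod.val_lt _, ?_⟩
  rw [← ZMod.natCast_eq_natCast_iff, Nat.cast_mul, ZMod.natCast_zmod_val, mul_left_comm,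
    ZMod.coe_mul_inv_eq_one a hcop, mul_one]

lemma rho_add_mul {a m : ℕ} (hcop : a.Coprime m) (ha : 0 < a) (hm : 0 < m) (n : ℕ) :
    rho a m (n + a * m) = rho a m n + 1 := by
  obtain ⟨u₀, hu₀m, hu₀⟩ := exists_lt_mul_modEq hcop hm (n + a * m)
  have hu₀le : a * u₀ ≤ n + a * m := by nlinarith
  obtain ⟨v₀, hv₀⟩ := (Nat.modEq_iff_dvd' hu₀le).mp hu₀
  have hsplit : {p : ℕ × ℕ | a * p.1 + m * p.2 = n + a * m} =
      insert (u₀, v₀) ((fun p : ℕ × ℕ => (p.1 + m, p.2)) '' {p | a * p.1 + m * p.2 = n}) := by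
    ext ⟨u, v⟩
    simp only [Set.mem_ofPred_eq, Set.mem_insert_iff, Set.mem_image, Prod.mk.injEq, Prod.exists]
    constructor
    · intro h
      by_cases hu : u < m
      · have hu' : u = u₀ := by
          refine Nat.ModEq.eq_of_lt_of_lt (Nat.ModEq.cancel_left_of_coprime
            (Nat.coprime_comm.mp hcop) ?_) hu hu₀m
          exact ((Nat.modEq_iff_dvd' (by omega)).mpr ⟨v, by omega⟩).trans hu₀.symm
        subst hu'
        exact Or.inl ⟨rfl, Nat.eq_of_mul_eq_mul_left hm (by omega)⟩
      · refine Or.inr ⟨u - m, v, ?_, by omega, rfl⟩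
        rw [Nat.mul_sub]
        have : a * m ≤ a * u := Nat.mul_le_mul_left a (by omega)
        omega
    · rintro (⟨rfl, rfl⟩ | ⟨u', v', h, rfl, rfl⟩)
      · omega
      · rw [mul_add]
        omega
  have hnew : (u₀, v₀) ∉ (fun p : ℕ × ℕ => (p.1 + m, p.2)) '' {p | a * p.1 + m * p.2 = n} := by
    rintro ⟨p, -, hp⟩
    have := congrArg Prod.fst hp
    simp only at this
    omega
  have hinj : Function.Injective fun p : ℕ × ℕ => (p.1 + m, p.2) := fun p q h => by
    simp only [Prod.mk.injEq, Nat.add_right_cancel_iff] at h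
    exact Prod.ext h.1 h.2
  rw [rho_eq_ncard, rho_eq_ncard, hsplit,
    Set.ncard_insert_of_notMem hnew ((finite_setOf_mul_add_mul_eq ha hm n).image _),
    Set.ncard_image_of_injective _ hinj]

lemma rho_add_mul_mul {a m : ℕ} (hcop : a.Coprime m) (ha : 0 < a) (hm : 0 < m) (n k : ℕ) :
    rho a m (n + k * (a * m)) = rho a m n + k := by
  induction k with
  | zero => simp
  | succ k ih => rw [add_one_mul, ← add_assoc, rho_add_mul hcop ha hm, ih, add_assoc]

lemma rho_eq_zero_iff {a m : ℕ} (ha : 0 < a) (hm : 0 < m) (n : ℕ) :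
    rho a m n = 0 ↔ n ∉ AddSubmonoid.closure {a, m} := by
  rw [rho_eq_ncard, Set.ncard_eq_zero (finite_setOf_mul_add_mul_eq ha hm n),
    AddSubmonoid.mem_closure_pair, Set.eq_empty_iff_forall_notMem]
  simp [mul_comm]

/-- `Fr_t({0,a,m}) = t·am − a − m`: this number has fewer than `t` representations
`au + mv`, while every larger integer has at least `t` such representations. -/
theorem stmt_17 (a m : ℕ) (ha : 2 ≤ a) (hm : 2 ≤ m) (hcop : Nat.Coprime a m)
    (t : ℕ) (ht : 1 ≤ t) :
    rho a m (t * a * m - a - m) < t ∧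
    ∀ n : ℕ, t * a * m - a - m < n → t ≤ rho a m n := by
  have ha₀ : 0 < a := by omega
  have hm₀ : 0 < m := by omega
  obtain ⟨hgap, hrepr⟩ := frobeniusNumber_iff.mp (frobeniusNumber_pair hcop ha hm)
  have hshift : t * a * m - a - m = (a * m - a - m) + (t - 1) * (a * m) := by
    have : t * a * m = (t - 1) * (a * m) + a * m := by
      obtain ⟨s, rfl⟩ : ∃ s, t = s + 1 := ⟨t - 1, by omega⟩
      simp only [add_tsub_cancel_right]
      ring
    have := Nat.add_le_mul ha hm
    omega
  refine ⟨?_, fun n hn => ?_⟩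
  · rw [hshift, rho_add_mul_mul hcop ha₀ hm₀, (rho_eq_zero_iff ha₀ hm₀ _).mpr hgap]
    omega
  · obtain ⟨k, rfl⟩ : ∃ k, n = k + (t - 1) * (a * m) := ⟨n - (t - 1) * (a * m), by omega⟩
    have hk : rho a m k ≠ 0 := fun h => (rho_eq_zero_iff ha₀ hm₀ k).mp h (hrepr k (by omega))
    rw [rho_add_mul_mul hcop ha₀ hm₀]
    omega
end

section
/- Let a, m ≥ 2 with gcd(a,m)=1, A = {0,a,m}, and t ≥ 1. Then the number of nonnegative integers with fewer than t representations au+mv equals (t−1)am + (a−1)(m−1)/2; i.e., |E_t(A)| = (t−1)am + ½(a−1)(m−1). -/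
open Finset

-- The least `u ≥ 0` with `a * u ≡ n [MOD m]` (for `a` invertible mod `m`).
noncomputable def minCoeff (a m n : ℕ) : ℕ := ((a : ZMod m)⁻¹ * n).val

section
variable {a m : ℕ}

theorem minCoeff_lt [NeZero m] (n : ℕ) : minCoeff a m n < m := ZMod.val_lt _

theorem mod_eq_minCoeff_iff [NeZero m] (hcop : a.Coprime m) {n u : ℕ} :
    u % m = minCoeff a m n ↔ a * u ≡ n [MOD m] := by
  have hunit : IsUnit (a : ZMod m) := (ZMod.isUnit_iff_coprime a m).mpr hcop
  rw [← ZMod.natCast_eq_natCast_iff, minCoeff, ← ZMod.val_natCast, (ZMod.val_injective m).eq_iff,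
    Nat.cast_mul]
  constructor
  · intro h
    rw [h, ← mul_assoc, ZMod.mul_inv_of_unit _ hunit, one_mul]
  · intro h
    rw [← h, ← mul_assoc, ZMod.inv_mul_of_unit _ hunit, one_mul]

theorem minCoeff_eq_iff [NeZero m] (hcop : a.Coprime m) {n u : ℕ} (hu : u < m) :
    minCoeff a m n = u ↔ a * u ≡ n [MOD m] := by
  rw [← mod_eq_minCoeff_iff hcop, Nat.mod_eq_of_lt hu, eq_comm]

theorem mul_minCoeff_modEq [NeZero m] (hcop : a.Coprime m) (n : ℕ) :
    a * minCoeff a m n ≡ n [MOD m] :=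
  (minCoeff_eq_iff hcop (minCoeff_lt n)).1 rfl

theorem lt_div_iff_mul_add_le (ha : 0 < a) {n u : ℕ} (hu : u < m) (j : ℕ) :
    j < (n + a * m - a * u) / (a * m) ↔ a * (u + j * m) ≤ n := by
  have hau : a * u < a * m := Nat.mul_lt_mul_of_pos_left hu ha
  rw [Nat.lt_iff_add_one_le, Nat.le_div_iff_mul_le (Nat.mul_pos ha (by omega)),
    show (j + 1) * (a * m) = j * (a * m) + a * m by ring,
    show a * (u + j * m) = a * u + j * (a * m) by ring]
  omega

theorem rho_eq_div (ha : 0 < a) [NeZero m] (hcop : a.Coprime m) (n : ℕ) :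
    rho a m n = (n + a * m - a * minCoeff a m n) / (a * m) := by
  set u₀ := minCoeff a m n
  have hu₀ : u₀ < m := minCoeff_lt n
  have hrepr : {p : ℕ × ℕ | a * p.1 + m * p.2 = n} =
      (fun j => (u₀ + j * m, (n - a * (u₀ + j * m)) / m)) '' Set.Iio
        ((n + a * m - a * u₀) / (a * m)) := by
    ext ⟨u, v⟩
    simp only [Set.mem_ofPred_eq, Set.mem_image, Set.mem_Iio, lt_div_iff_mul_add_le ha hu₀,
      Prod.mk.injEq]
    constructor
    · rintro rfl
      have hu : u % m = u₀ := (mod_eq_minCoeff_iff hcop).2 (by simp [Nat.ModEq])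
      have hdecomp : u₀ + u / m * m = u := hu ▸ Nat.mod_add_div' u m
      refine ⟨u / m, by rw [hdecomp]; omega, hdecomp, ?_⟩
      rw [hdecomp, Nat.add_sub_cancel_left, Nat.mul_div_cancel_left _ (NeZero.pos m)]
    · rintro ⟨j, hj, rfl, rfl⟩
      have hmod : a * (u₀ + j * m) ≡ n [MOD m] := by
        rw [show a * (u₀ + j * m) = a * u₀ + a * j * m by ring]
        exact (Nat.add_mul_mod_self_right _ _ _).trans (mul_minCoeff_modEq hcop n)
      have := Nat.mul_div_cancel' ((Nat.modEq_iff_dvd' hj).1 hmod)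
      omega
  have hinj : Function.Injective (fun j => (u₀ + j * m, (n - a * (u₀ + j * m)) / m)) := by
    intro i j hij
    simp only [Prod.mk.injEq] at hij
    exact Nat.eq_of_mul_eq_mul_right (NeZero.pos m) (by omega)
  rw [rho, ← Set.coe_ofPred, Nat.card_coe_set_eq, hrepr, Set.ncard_image_of_injective _ hinj,
    Set.ncard_Iio_nat]

theorem lt_rho_iff (ha : 0 < a) [NeZero m] (hcop : a.Coprime m) {n s : ℕ} :
    s < rho a m n ↔ a * (minCoeff a m n + s * m) ≤ n := by
  rw [rho_eq_div ha hcop, lt_div_iff_mul_add_le ha (minCoeff_lt n)]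

theorem card_setOf_lt_mul_minCoeff_add [NeZero m] (hcop : a.Coprime m) (s : ℕ) :
    Nat.card {n | n < a * (minCoeff a m n + s * m)} = ∑ u ∈ range m, a * (u + s * m) / m := by
  have hfin : {n | n < a * (minCoeff a m n + s * m)} =
      ↑{n ∈ range (a * (m + s * m)) | n < a * (minCoeff a m n + s * m)} := by
    ext n
    simp only [Set.mem_ofPred_eq, coe_filter, mem_range, iff_and_self]
    intro h
    have hlt : minCoeff a m n < m := minCoeff_lt n
    have := Nat.mul_le_mul_left a (Nat.add_le_add_right hlt.le (s * m))
    omega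
  rw [hfin, Nat.card_coe_set_eq, Set.ncard_coe_finset,
    card_eq_sum_card_fiberwise fun n _ => mem_range.2 (minCoeff_lt (a := a) (m := m) n)]
  refine sum_congr rfl fun u hu => ?_
  have hfiber : {n ∈ {n ∈ range (a * (m + s * m)) | n < a * (minCoeff a m n + s * m)} |
      minCoeff a m n = u} = {n ∈ range (a * (u + s * m)) | n ≡ a * (u + s * m) [MOD m]} := by
    have hu : u < m := mem_range.1 hu
    have hshift : a * (u + s * m) ≡ a * u [MOD m] := by
      rw [show a * (u + s * m) = a * u + a * s * m by ring]
      exact Nat.add_mul_mod_self_right _ _ _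
    ext n
    simp only [mem_filter, mem_range, minCoeff_eq_iff hcop hu]
    constructor
    · rintro ⟨⟨-, hlt⟩, hmod⟩
      exact ⟨by rwa [← (minCoeff_eq_iff hcop hu).2 hmod], (hshift.trans hmod).symm⟩
    · rintro ⟨hlt, hmod⟩
      have hmod' : a * u ≡ n [MOD m] := (hshift.symm.trans hmod.symm)
      refine ⟨⟨?_, by rwa [(minCoeff_eq_iff hcop hu).2 hmod']⟩, hmod'⟩
      have := Nat.mul_le_mul_left a (Nat.add_le_add_right hu.le (s * m))
      omega
  rw [hfiber, ← Nat.count_eq_card_filter_range, Nat.count_modEq_card _ (NeZero.pos m)]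
  simp

theorem mul_div_add_mul_sub_div (hcop : a.Coprime m) {u : ℕ} (hu : 0 < u) (hum : u < m) :
    a * u / m + a * (m - u) / m = a - 1 := by
  have hm : 0 < m := hu.trans hum
  have hndvd : a * u % m ≠ 0 := fun h =>
    absurd (Nat.le_of_dvd hu (hcop.symm.dvd_of_dvd_mul_left (Nat.dvd_of_mod_eq_zero h))) (by omega)
  have hsum : a * u + a * (m - u) = a * m := by rw [← Nat.mul_add, Nat.add_sub_cancel' hum.le]
  have hcarry : m ≤ a * u % m + a * (m - u) % m := by
    refine Nat.le_of_dvd (by omega) (Nat.dvd_of_mod_eq_zero ?_)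
    rw [← Nat.add_mod, hsum, Nat.mul_mod_left]
  have : (a * u + a * (m - u)) / m = a * u / m + a * (m - u) / m +
      if m ≤ a * u % m + a * (m - u) % m then 1 else 0 := Nat.add_div hm
  rw [hsum, Nat.mul_div_cancel _ hm, if_pos hcarry] at this
  exact (Nat.sub_eq_of_eq_add this).symm

theorem sum_range_mul_div (hcop : a.Coprime m) :
    ∑ u ∈ range m, a * u / m = (a - 1) * (m - 1) / 2 := by
  obtain _ | k := m
  · simp
  have hpair : ∑ u ∈ range (k + 1), (a * u / (k + 1) + a * (k + 1 - u) / (k + 1)) =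
      (a - 1) * k + a := by
    rw [sum_range_succ', sum_congr rfl fun i hi =>
      mul_div_add_mul_sub_div hcop i.succ_pos (by rw [mem_range] at hi; omega)]
    simp [mul_comm]
  have hreflect : ∑ u ∈ range (k + 1), a * (k + 1 - u) / (k + 1) =
      ∑ u ∈ range (k + 1), a * u / (k + 1) + a := by
    calc ∑ u ∈ range (k + 1), a * (k + 1 - u) / (k + 1)
        = ∑ u ∈ range (k + 1), a * (u + 1) / (k + 1) := by
          rw [← sum_range_reflect (fun u => a * (u + 1) / (k + 1))]
          refine sum_congr rfl fun u hu => ?_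
          rw [mem_range] at hu
          congr 2
          omega
      _ = ∑ u ∈ range (k + 2), a * u / (k + 1) := by simp [sum_range_succ' _ (k + 1)]
      _ = _ := by rw [sum_range_succ, Nat.mul_div_cancel _ k.succ_pos]
  rw [sum_add_distrib, hreflect] at hpair
  rw [Nat.add_sub_cancel]
  omega

end

/-- `|E_t({0,a,m})| = (t−1)am + (a−1)(m−1)/2` for coprime `a, m ≥ 2`. -/
theorem stmt_18 (a m : ℕ) (ha : 2 ≤ a) (hm : 2 ≤ m) (hcop : Nat.Coprime a m)
    (t : ℕ) (ht : 1 ≤ t) :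
    Nat.card {n : ℕ | rho a m n < t}
      = (t - 1) * a * m + (a - 1) * (m - 1) / 2 := by
  have : NeZero m := ⟨by omega⟩
  obtain ⟨s, rfl⟩ : ∃ s, t = s + 1 := ⟨t - 1, by omega⟩
  have hset : {n | rho a m n < s + 1} = {n | n < a * (minCoeff a m n + s * m)} := by
    ext n
    rw [Set.mem_ofPred_eq, Set.mem_ofPred_eq, Nat.lt_succ_iff, ← not_lt, lt_rho_iff (by omega) hcop,
      not_le]
  have hterm : ∀ u, a * (u + s * m) / m = a * u / m + a * s := fun u => by
    rw [show a * (u + s * m) = a * u + a * s * m by ring, Nat.add_mul_div_right _ _ (by omega)]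
  simp only [hset, card_setOf_lt_mul_minCoeff_add hcop, hterm, sum_add_distrib,
    sum_range_mul_div hcop, sum_const, card_range, smul_eq_mul, Nat.add_sub_cancel]
  ring
end
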